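/- arXiv:2202.03885 — 5 statements merged into one kernel-verified Lean document; each statement's English description precedes it below -/
import Mathlib

section
/- Let P = v1v2v3v4v5 be a path on 5 vertices with color lists satisfying |L(v1)| ≥ 2, |L(v2)| ≥ 3, |L(v3)| ≥ 3, |L(v4)| ≥ 2, |L(v5)| ≥ 2. Then P admits a 2-distance list coloring (vi and vj get distinct colors whenever |i−j| ≤ 2, each vi colored from L(vi)). -/
/-!
Indices run over `0, …, 4`. Trim `L 4` to two colors and give vertex `2` a color `c` outside them,
so that `L 4` keeps two colors different from `c`. If `c ∉ L 3`, color `0, 1, 3, 4` greedily in this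
order. If `c ∈ L 3 \ L 0`, give vertex `3` a color other than `c` and color `1, 0, 4` greedily.
If `c ∈ L 0 ∩ L 3`, start afresh: vertices `0` and `3` share the color `c`, and `4, 2, 1` are
colored greedily.
-/

open Finset

lemma Finset.exists_mem_ne_ne {α : Type*} [DecidableEq α] {s : Finset α} (hs : 2 < #s)
    (a b : α) :
    ∃ x ∈ s, x ≠ a ∧ x ≠ b := by
  obtain ⟨x, hx, hxab⟩ := exists_mem_notMem_of_card_lt_card
    ((card_le_two : #{a, b} ≤ 2).trans_lt hs)
  simp only [mem_insert, mem_singleton, not_or] at hxab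
  exact ⟨x, hx, hxab⟩

variable {α : Type*}

def TwoDistanceListColorable {n : ℕ} (L : Fin n → Finset α) : Prop :=
  ∃ c : Fin n → α, (∀ i, c i ∈ L i) ∧
    ∀ i j : Fin n, i.val < j.val → j.val ≤ i.val + 2 → c i ≠ c j

namespace TwoDistanceListColorable

variable {L : Fin 5 → Finset α}

lemma of_colors {c₀ c₁ c₂ c₃ c₄ : α}
    (m₀ : c₀ ∈ L 0) (m₁ : c₁ ∈ L 1) (m₂ : c₂ ∈ L 2) (m₃ : c₃ ∈ L 3) (m₄ : c₄ ∈ L 4)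
    (h₀₁ : c₀ ≠ c₁) (h₀₂ : c₀ ≠ c₂) (h₁₂ : c₁ ≠ c₂) (h₁₃ : c₁ ≠ c₃) (h₂₃ : c₂ ≠ c₃)
    (h₂₄ : c₂ ≠ c₄) (h₃₄ : c₃ ≠ c₄) :
    TwoDistanceListColorable L := by
  refine ⟨![c₀, c₁, c₂, c₃, c₄], fun i ↦ ?_, fun i j hij hji ↦ ?_⟩
  · fin_cases i <;> assumption
  · fin_cases i <;> fin_cases j <;> simp_all

variable [DecidableEq α]

lemma of_mem_zero_of_mem_three {a : α} (h₁ : 2 < #(L 1)) (h₂ : 2 < #(L 2)) (h₄ : 1 < #(L 4))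
    (m₀ : a ∈ L 0) (m₃ : a ∈ L 3) : TwoDistanceListColorable L := by
  obtain ⟨c₄, m₄, h₄a⟩ := exists_mem_ne h₄ a
  obtain ⟨c₂, m₂, h₂a, h₂₄⟩ := exists_mem_ne_ne h₂ a c₄
  obtain ⟨c₁, m₁, h₁a, h₁₂⟩ := exists_mem_ne_ne h₁ a c₂
  exact of_colors m₀ m₁ m₂ m₃ m₄ h₁a.symm h₂a.symm h₁₂ h₁a h₂a h₂₄ h₄a.symm

lemma of_notMem_three {c₂ : α} (h₀ : 1 < #(L 0)) (h₁ : 2 < #(L 1)) (h₃ : 1 < #(L 3))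
    (h₄ : 1 < #((L 4).erase c₂)) (m₂ : c₂ ∈ L 2) (n₃ : c₂ ∉ L 3) :
    TwoDistanceListColorable L := by
  obtain ⟨c₀, m₀, h₀₂⟩ := exists_mem_ne h₀ c₂
  obtain ⟨c₁, m₁, h₁₀, h₁₂⟩ := exists_mem_ne_ne h₁ c₀ c₂
  obtain ⟨c₃, m₃, h₃₁⟩ := exists_mem_ne h₃ c₁
  obtain ⟨c₄, m₄, h₄₃⟩ := exists_mem_ne h₄ c₃
  obtain ⟨h₄₂, m₄⟩ := mem_erase.1 m₄
  exact of_colors m₀ m₁ m₂ m₃ m₄ h₁₀.symm h₀₂ h₁₂ h₃₁.symm (ne_of_mem_of_not_mem m₃ n₃).symm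
    h₄₂.symm h₄₃.symm

lemma of_mem_three_of_notMem_zero {c₂ : α} (h₀ : 1 < #(L 0)) (h₁ : 2 < #(L 1)) (h₃ : 1 < #(L 3))
    (h₄ : 1 < #((L 4).erase c₂)) (m₂ : c₂ ∈ L 2) (n₀ : c₂ ∉ L 0) :
    TwoDistanceListColorable L := by
  obtain ⟨c₃, m₃, h₃₂⟩ := exists_mem_ne h₃ c₂
  obtain ⟨c₁, m₁, h₁₂, h₁₃⟩ := exists_mem_ne_ne h₁ c₂ c₃
  obtain ⟨c₀, m₀, h₀₁⟩ := exists_mem_ne h₀ c₁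
  obtain ⟨c₄, m₄, h₄₃⟩ := exists_mem_ne h₄ c₃
  obtain ⟨h₄₂, m₄⟩ := mem_erase.1 m₄
  exact of_colors m₀ m₁ m₂ m₃ m₄ h₀₁ (ne_of_mem_of_not_mem m₀ n₀) h₁₂ h₁₃ h₃₂.symm
    h₄₂.symm h₄₃.symm

end TwoDistanceListColorable

/-- A path `v1 … v5` with list sizes at least 2, 3, 3, 2, 2 admits a
2-distance list coloring. -/
theorem stmt1 (L : Fin 5 → Finset ℕ)
    (h0 : 2 ≤ (L 0).card) (h1 : 3 ≤ (L 1).card) (h2 : 3 ≤ (L 2).card)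
    (h3 : 2 ≤ (L 3).card) (h4 : 2 ≤ (L 4).card) :
    ∃ c : Fin 5 → ℕ, (∀ i, c i ∈ L i) ∧
      ∀ i j : Fin 5, i.val < j.val → j.val ≤ i.val + 2 → c i ≠ c j := by
  obtain ⟨M, hM₄, hM⟩ := exists_subset_card_eq h4
  obtain ⟨c₂, m₂, n₂⟩ := exists_mem_notMem_of_card_lt_card (hM ▸ h2 : #M < #(L 2))
  have h₄ : 1 < #((L 4).erase c₂) := hM.ge.trans (card_le_card (subset_erase.2 ⟨hM₄, n₂⟩))
  show TwoDistanceListColorable L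
  by_cases m₃ : c₂ ∈ L 3
  · by_cases m₀ : c₂ ∈ L 0
    · exact .of_mem_zero_of_mem_three h1 h2 h4 m₀ m₃
    · exact .of_mem_three_of_notMem_zero h0 h1 h3 h₄ m₂ m₀
  · exact .of_notMem_three h0 h1 h3 h₄ m₂ m₃
end

section
/- Let P = v1v2v3v4v5v6 be a path on 6 vertices with color lists satisfying |L(v1)| ≥ 2, |L(v2)| ≥ 3, |L(v3)| ≥ 2, |L(v4)| ≥ 3, |L(v5)| ≥ 3, |L(v6)| ≥ 2. Then P admits a 2-distance list coloring. -/
private lemma pick_avoid {S F : Finset ℕ} (h : F.card < S.card) : ∃ x ∈ S, x ∉ F := by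
  by_contra hc
  push_neg at hc
  exact absurd (Finset.card_le_card (fun x hx => hc x hx)) (by omega)

/-- A path `v1 … v6` with list sizes at least 2, 3, 2, 3, 3, 2 admits a
2-distance list coloring. -/
theorem stmt2 (L : Fin 6 → Finset ℕ)
    (h0 : 2 ≤ (L 0).card) (h1 : 3 ≤ (L 1).card) (h2 : 2 ≤ (L 2).card)
    (h3 : 3 ≤ (L 3).card) (h4 : 3 ≤ (L 4).card) (h5 : 2 ≤ (L 5).card) :
    ∃ c : Fin 6 → ℕ, (∀ i, c i ∈ L i) ∧
      ∀ i j : Fin 6, i.val < j.val → j.val ≤ i.val + 2 → c i ≠ c j := by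
  classical
  have key : ∃ c2 ∈ L 2, ∃ c3 ∈ L 3, c3 ≠ c2 ∧
      (∃ c0 ∈ L 0, c0 ≠ c2 ∧ ∃ c1 ∈ L 1, c1 ≠ c0 ∧ c1 ≠ c2 ∧ c1 ≠ c3) ∧
      (∃ c5 ∈ L 5, c5 ≠ c3 ∧ ∃ c4 ∈ L 4, c4 ≠ c2 ∧ c4 ≠ c3 ∧ c4 ≠ c5) := by
    by_contra hcon
    obtain ⟨a, ha, b, hb, hab⟩ := Finset.one_lt_card.mp (show 1 < (L 2).card by omega)
    have main : ∀ c2 ∈ L 2, L 4 ⊆ insert c2 (L 5) ∧ (L 5).card ≤ 2 := by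
      intro c2 hc2
      -- get two distinct elements of L 3 \ {c2}
      have hcard3 : 1 < (L 3 \ {c2}).card := by
        have := Finset.le_card_sdiff ({c2} : Finset ℕ) (L 3)
        have hs : (L 3).card - ({c2} : Finset ℕ).card ≤ (L 3 \ {c2}).card := by
          have := Finset.card_le_card_sdiff_add_card (s := L 3) (t := ({c2} : Finset ℕ))
          omega
        simp only [Finset.card_singleton] at hs
        omega
      obtain ⟨c3, hc3m, c3', hc3m', hne33⟩ := Finset.one_lt_card.mp hcard3
      rw [Finset.mem_sdiff, Finset.mem_singleton] at hc3m hc3m'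
      obtain ⟨hc3, hc3ne⟩ := hc3m
      obtain ⟨hc3', hc3ne'⟩ := hc3m'
      -- at least one of c3, c3' admits a left completion
      have hleft : (∃ c0 ∈ L 0, c0 ≠ c2 ∧ ∃ c1 ∈ L 1, c1 ≠ c0 ∧ c1 ≠ c2 ∧ c1 ≠ c3) ∨
          (∃ c0 ∈ L 0, c0 ≠ c2 ∧ ∃ c1 ∈ L 1, c1 ≠ c0 ∧ c1 ≠ c2 ∧ c1 ≠ c3') := by
        by_contra hlf
        push_neg at hlf
        obtain ⟨hf1, hf2⟩ := hlf
        obtain ⟨d, hd, hdne⟩ := pick_avoid (show ({c2} : Finset ℕ).card < (L 0).card by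
          simp; omega)
        rw [Finset.mem_singleton] at hdne
        have hsub : L 1 ⊆ {d, c2} := by
          intro x hx
          have e1 := hf1 d hd hdne x hx
          have e2 := hf2 d hd hdne x hx
          simp only [Finset.mem_insert, Finset.mem_singleton]
          by_cases hxd : x = d
          · exact Or.inl hxd
          · by_cases hxc : x = c2
            · exact Or.inr hxc
            · exfalso
              have := e1 hxd hxc
              have := e2 hxd hxc
              exact hne33 (by
                have := e1 hxd hxc
                have := e2 hxd hxc
                omega)
        have hle := Finset.card_le_card hsub
        have : ({d, c2} : Finset ℕ).card ≤ 2 :=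
          le_trans (Finset.card_insert_le _ _) (by simp)
        omega
      -- from a successful left, the right must fail, forcing structure
      have finish : ∀ cc, cc ∈ L 3 → cc ≠ c2 →
          (∃ c0 ∈ L 0, c0 ≠ c2 ∧ ∃ c1 ∈ L 1, c1 ≠ c0 ∧ c1 ≠ c2 ∧ c1 ≠ cc) →
          L 4 ⊆ insert c2 (L 5) ∧ (L 5).card ≤ 2 := by
        intro cc hcc hccne hL
        have hRfail : ∀ c5 ∈ L 5, c5 ≠ cc → ∀ c4 ∈ L 4,
            ¬(c4 ≠ c2 ∧ c4 ≠ cc ∧ c4 ≠ c5) := by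
          intro c5 hc5 hne5 c4 hc4 hprop
          exact hcon ⟨c2, hc2, cc, hcc, hccne, hL,
            c5, hc5, hne5, c4, hc4, hprop.1, hprop.2.1, hprop.2.2⟩
        have sub45 : ∀ c5 ∈ L 5, c5 ≠ cc → L 4 ⊆ {c2, cc, c5} := by
          intro c5 hc5 hne5 x hx
          by_contra hxm
          simp only [Finset.mem_insert, Finset.mem_singleton, not_or] at hxm
          exact hRfail c5 hc5 hne5 x hx ⟨hxm.1, hxm.2.1, hxm.2.2⟩
        obtain ⟨e, he, hec⟩ := pick_avoid (show ({cc} : Finset ℕ).card < (L 5).card by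
          simp; omega)
        rw [Finset.mem_singleton] at hec
        have hL5sub : L 5 ⊆ {cc, e} := by
          intro x hx
          simp only [Finset.mem_insert, Finset.mem_singleton]
          by_cases hxcc : x = cc
          · exact Or.inl hxcc
          · by_cases hxe : x = e
            · exact Or.inr hxe
            · exfalso
              have hsmall : L 4 ⊆ {c2, cc} := by
                intro y hy
                have m1 := sub45 e he hec hy
                have m2 := sub45 x hx hxcc hy
                simp only [Finset.mem_insert, Finset.mem_singleton] at m1 m2 ⊢
                rcases m1 with h | h | h
                · exact Or.inl h
                · exact Or.inr h
                · rcases m2 with h' | h' | h'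
                  · exact Or.inl h'
                  · exact Or.inr h'
                  · exact absurd (show x = e by omega) hxe
              have hle := Finset.card_le_card hsmall
              have : ({c2, cc} : Finset ℕ).card ≤ 2 :=
                le_trans (Finset.card_insert_le _ _) (by simp)
              omega
        have hccL5 : cc ∈ L 5 := by
          by_contra hcc5
          have : L 5 ⊆ {e} := by
            intro x hx
            have := hL5sub hx
            simp only [Finset.mem_insert, Finset.mem_singleton] at this ⊢
            rcases this with h | h
            · exact absurd (h ▸ hx) hcc5
            · exact h
          have := Finset.card_le_card this
          simp at this
          omega
        constructor
        · intro x hx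
          have := sub45 e he hec hx
          simp only [Finset.mem_insert, Finset.mem_singleton] at this ⊢
          rcases this with h | h | h
          · exact Or.inl h
          · exact Or.inr (h ▸ hccL5)
          · exact Or.inr (h ▸ he)
        · have hle := Finset.card_le_card hL5sub
          have : ({cc, e} : Finset ℕ).card ≤ 2 :=
            le_trans (Finset.card_insert_le _ _) (by simp)
          omega
      rcases hleft with hL | hL
      · exact finish c3 hc3 hc3ne hL
      · exact finish c3' hc3' hc3ne' hL
    obtain ⟨sa, hc5a⟩ := main a ha
    obtain ⟨sb, _⟩ := main b hb
    have hsub : L 4 ⊆ L 5 := by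
      intro x hx
      have ha' := sa hx
      have hb' := sb hx
      simp only [Finset.mem_insert] at ha' hb'
      rcases ha' with h | h
      · rcases hb' with h' | h'
        · exact absurd (h ▸ h') (by exact fun heq => hab (heq ▸ rfl))
        · exact h'
      · exact h
    have := Finset.card_le_card hsub
    omega
  obtain ⟨c2, hc2, c3, hc3, hne32, ⟨c0, hc0, hne02, c1, hc1, hne10, hne12, hne13⟩,
    ⟨c5, hc5, hne53, c4, hc4, hne42, hne43, hne45⟩⟩ := key
  refine ⟨![c0, c1, c2, c3, c4, c5], ?_, ?_⟩
  · intro i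
    fin_cases i <;> simpa
  · intro i j hij hle
    fin_cases i <;> fin_cases j <;>
      simp_all [Matrix.cons_val_zero, Matrix.cons_val_one] <;>
      first
        | omega
        | exact Ne.symm ‹_›
        | tauto
end

section
/- Consider a path v1v2v3v4v5 on 5 vertices with lists over a finite color set, with |L(v1)| ≥ 2, |L(v2)| ≥ 2, |L(v3)| ≥ 4, |L(v4)| ≥ 2, |L(v5)| ≥ 2. Then either the path is 2-distance list colorable, or there exist four distinct colors a, b, c, d such that L(v1) = L(v2) = {a,b}, L(v4) = L(v5) = {c,d}, and L(v3) = {a,b,c,d}. -/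
/-!
If the path has no coloring, then every choice `x₁, x₂, x₄, x₅` from `L(v₁), L(v₂), L(v₄), L(v₅)`
that is proper on the pairs avoiding `v₃` must use up all of `L(v₃)`; as `|L(v₃)| ≥ 4`, the four
colors are distinct and form `L(v₃)`. Fixing one such choice `(p, q, r, s)` and changing one
color at a time gives `L(v₁) = {p, q}` and `L(v₅) = {r, s}`. A color common to `L(v₂)` and
`L(v₅)` could be used on both, so these lists are disjoint; this rules out `r ∈ L(v₂)` and then
forces `L(v₂) = {p, q}`. The path is symmetric under reversal, which handles `L(v₄)`.
-/

namespace PathListColoring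

variable {α : Type*} [DecidableEq α]

theorem pairwise_ne_of_four_le_card {a b c d : α} (h : 4 ≤ ({a, b, c, d} : Finset α).card) :
    a ≠ b ∧ a ≠ c ∧ a ≠ d ∧ b ≠ c ∧ b ≠ d ∧ c ≠ d := by
  refine ⟨?_, ?_, ?_, ?_, ?_, ?_⟩ <;> rintro rfl <;> grind [Finset.card_le_three]

def MiddleCovered (A B C D E : Finset α) : Prop :=
  ∀ x₁ ∈ A, ∀ x₂ ∈ B, ∀ x₄ ∈ D, ∀ x₅ ∈ E,
    x₁ ≠ x₂ → x₂ ≠ x₄ → x₄ ≠ x₅ → C ⊆ {x₁, x₂, x₄, x₅}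

theorem middleCovered_of_not_colorable (L : Fin 5 → Finset α)
    (h : ¬ ∃ c : Fin 5 → α, (∀ i, c i ∈ L i) ∧
      ∀ i j : Fin 5, i.val < j.val → j.val ≤ i.val + 2 → c i ≠ c j) :
    MiddleCovered (L 0) (L 1) (L 2) (L 3) (L 4) := by
  intro x₁ h₁ x₂ h₂ x₄ h₄ x₅ h₅ h₁₂ h₂₄ h₄₅ z hz
  by_contra hz'
  simp only [Finset.mem_insert, Finset.mem_singleton, not_or] at hz'
  refine h ⟨![x₁, x₂, z, x₄, x₅], fun i => ?_, fun i j hij hji => ?_⟩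
  · fin_cases i <;> assumption
  · fin_cases i <;> fin_cases j <;> simp_all [eq_comm]

variable {A B C D E : Finset α}

theorem MiddleCovered.symm (h : MiddleCovered A B C D E) : MiddleCovered E D C B A := by
  intro x₅ h₅ x₄ h₄ x₂ h₂ x₁ h₁ h₅₄ h₄₂ h₂₁
  convert h x₁ h₁ x₂ h₂ x₄ h₄ x₅ h₅ h₂₁.symm h₄₂.symm h₅₄.symm using 1
  ext; simp only [Finset.mem_insert, Finset.mem_singleton]; tauto

theorem MiddleCovered.eq_and_pairwise_ne (h : MiddleCovered A B C D E) (hC : 4 ≤ C.card)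
    {x₁ x₂ x₄ x₅ : α} (h₁ : x₁ ∈ A) (h₂ : x₂ ∈ B) (h₄ : x₄ ∈ D) (h₅ : x₅ ∈ E)
    (h₁₂ : x₁ ≠ x₂) (h₂₄ : x₂ ≠ x₄) (h₄₅ : x₄ ≠ x₅) :
    C = {x₁, x₂, x₄, x₅} ∧
      x₁ ≠ x₂ ∧ x₁ ≠ x₄ ∧ x₁ ≠ x₅ ∧ x₂ ≠ x₄ ∧ x₂ ≠ x₅ ∧ x₄ ≠ x₅ := by
  have hsub := h x₁ h₁ x₂ h₂ x₄ h₄ x₅ h₅ h₁₂ h₂₄ h₄₅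
  exact ⟨Finset.eq_of_subset_of_card_le hsub (Finset.card_le_four.trans hC),
    pairwise_ne_of_four_le_card (hC.trans (Finset.card_le_card hsub))⟩

theorem MiddleCovered.disjoint (h : MiddleCovered A B C D E) (hC : 4 ≤ C.card)
    (hA : 2 ≤ A.card) (hD : 2 ≤ D.card) : Disjoint B E := by
  refine Finset.disjoint_left.2 fun y hyB hyE => ?_
  obtain ⟨x₁, h₁, h₁y⟩ := Finset.exists_mem_ne hA y
  obtain ⟨x₄, h₄, h₄y⟩ := Finset.exists_mem_ne hD y
  obtain ⟨-, -, -, -, -, hyy, -⟩ := h.eq_and_pairwise_ne hC h₁ hyB h₄ hyE h₁y h₄y.symm h₄y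
  exact hyy rfl

theorem MiddleCovered.first_eq_pair (h : MiddleCovered A B C D E) (hC : 4 ≤ C.card)
    (hA : 2 ≤ A.card) {p q r s : α} (hp : p ∈ A) (hq : q ∈ B) (hr : r ∈ D) (hs : s ∈ E)
    (hpq : p ≠ q) (hqr : q ≠ r) (hrs : r ≠ s) : A = {p, q} := by
  refine Finset.eq_of_subset_of_card_le (fun x hx => ?_) (Finset.card_le_two.trans hA)
  by_cases hxq : x = q
  · simp [hxq]
  obtain ⟨hCx, -⟩ := h.eq_and_pairwise_ne hC hx hq hr hs hxq hqr hrs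
  obtain ⟨hCp, -, hpr, hps, -, -, -⟩ := h.eq_and_pairwise_ne hC hp hq hr hs hpq hqr hrs
  have hpC : p ∈ C := by simp [hCp]
  simp only [hCx, Finset.mem_insert, Finset.mem_singleton] at hpC
  simp only [Finset.mem_insert, Finset.mem_singleton]
  tauto

theorem MiddleCovered.second_eq_pair (h : MiddleCovered A B C D E) (hC : 4 ≤ C.card)
    (hB : 2 ≤ B.card) {p q r s : α} (hp : p ∈ A) (hq : q ∈ B) (hr : r ∈ D) (hs : s ∈ E)
    (hpq : p ≠ q) (hqr : q ≠ r) (hrs : r ≠ s) (hrB : r ∉ B) : B = {p, q} := by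
  refine Finset.eq_of_subset_of_card_le (fun y hy => ?_) (Finset.card_le_two.trans hB)
  simp only [Finset.mem_insert, Finset.mem_singleton]
  by_contra! hy'
  have hyr : y ≠ r := by rintro rfl; exact hrB hy
  obtain ⟨hCy, -⟩ := h.eq_and_pairwise_ne hC hp hy hr hs hy'.1.symm hyr hrs
  obtain ⟨hCq, -, -, -, -, hqs, -⟩ := h.eq_and_pairwise_ne hC hp hq hr hs hpq hqr hrs
  have hqC : q ∈ C := by simp [hCq]
  simp only [hCy, Finset.mem_insert, Finset.mem_singleton] at hqC
  grind

end PathListColoring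

/-- A path `v1 … v5` with list sizes at least 2, 2, 4, 2, 2: either it admits a
2-distance list coloring, or there are four distinct colors `a b c d` with
`L(v1) = L(v2) = {a,b}`, `L(v4) = L(v5) = {c,d}` and `L(v3) = {a,b,c,d}`. -/
theorem stmt7 (L : Fin 5 → Finset ℕ)
    (h0 : 2 ≤ (L 0).card) (h1 : 2 ≤ (L 1).card) (h2 : 4 ≤ (L 2).card)
    (h3 : 2 ≤ (L 3).card) (h4 : 2 ≤ (L 4).card) :
    (∃ c : Fin 5 → ℕ, (∀ i, c i ∈ L i) ∧
      ∀ i j : Fin 5, i.val < j.val → j.val ≤ i.val + 2 → c i ≠ c j) ∨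
    (∃ a b c d : ℕ, a ≠ b ∧ a ≠ c ∧ a ≠ d ∧ b ≠ c ∧ b ≠ d ∧ c ≠ d ∧
      L 0 = {a, b} ∧ L 1 = {a, b} ∧ L 3 = {c, d} ∧ L 4 = {c, d} ∧
      L 2 = {a, b, c, d}) := by
  refine or_iff_not_imp_left.2 fun hcol => ?_
  have h := PathListColoring.middleCovered_of_not_colorable L hcol
  obtain ⟨q, hq⟩ := Finset.card_pos.1 (by omega : 0 < (L 1).card)
  obtain ⟨p, hp, hpq⟩ := Finset.exists_mem_ne h0 q
  obtain ⟨r, hr, hrq⟩ := Finset.exists_mem_ne h3 q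
  obtain ⟨s, hs, hsr⟩ := Finset.exists_mem_ne h4 r
  obtain ⟨hL2, -, hpr, hps, hqr, hqs, hrs⟩ :=
    h.eq_and_pairwise_ne h2 hp hq hr hs hpq hrq.symm hsr.symm
  have hL0 := h.first_eq_pair h2 h0 hp hq hr hs hpq hqr hrs
  have hL4 := h.symm.first_eq_pair h2 h4 hs hr hq hp hrs.symm hqr.symm hpq.symm
  rw [Finset.pair_comm] at hL4
  have hrL1 : r ∉ L 1 := Finset.disjoint_right.1 (h.disjoint h2 h0 h3) (by simp [hL4])
  have hqL3 : q ∉ L 3 := Finset.disjoint_right.1 (h.symm.disjoint h2 h4 h1) (by simp [hL0])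
  have hL1 := h.second_eq_pair h2 h1 hp hq hr hs hpq hqr hrs hrL1
  have hL3 := h.symm.second_eq_pair h2 h3 hs hr hq hp hrs.symm hqr.symm hpq.symm hqL3
  rw [Finset.pair_comm] at hL3
  exact ⟨p, q, r, s, hpq, hpr, hps, hqr, hqs, hrs, hL0, hL1, hL3, hL4, hL2⟩
end

section
/- Let G be a minimal planar subcubic graph of girth at least 8 that is not 2-distance 6-colorable. Then G contains no k-path with k ≥ 2, i.e., no path whose internal vertices are at least two consecutive vertices of degree 2. -/
/-- `H` is a minor of `G`: there is a minor model, i.e. disjoint nonempty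
connected branch sets in `G` indexed by the vertices of `H`, with an edge of
`G` between the branch sets of any two adjacent vertices of `H`. -/
def IsMinor {α β : Type} (H : SimpleGraph α) (G : SimpleGraph β) : Prop :=
  ∃ B : α → Set β, (∀ a, (B a).Nonempty) ∧ Pairwise (Function.onFun Disjoint B) ∧
    (∀ a, (G.induce (B a)).Connected) ∧
    ∀ ⦃a₁ a₂⦄, H.Adj a₁ a₂ → ∃ u ∈ B a₁, ∃ v ∈ B a₂, G.Adj u v

/-- Planarity via Wagner's theorem: no `K₅` minor and no `K₃,₃` minor. -/
def IsPlanar {β : Type} (G : SimpleGraph β) : Prop :=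
  ¬ IsMinor (SimpleGraph.completeGraph (Fin 5)) G ∧
  ¬ IsMinor (completeBipartiteGraph (Fin 3) (Fin 3)) G

/-- `G` is 2-distance colorable with `k` colors: vertices at distance at most 2
(adjacent or sharing a common neighbor) receive distinct colors. -/
def TwoDistColorable {V : Type} (G : SimpleGraph V) (k : ℕ) : Prop :=
  ∃ c : V → Fin k, ∀ u v : V, u ≠ v →
    (G.Adj u v ∨ ∃ w, G.Adj u w ∧ G.Adj w v) → c u ≠ c v

/-! Deleting two adjacent 2-vertices `u`, `v` leaves a smaller graph that is again planar and
subcubic; it either has girth at least 8, and is colored by minimality, or is a forest, which is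
colored greedily from a leaf. Each deleted vertex keeps at most one neighbour in it, so no pair at
distance two is lost and the coloring stays valid in `G`. Finally `v` and then `u` see at most
`2 + 3 = 5` vertices within distance two, so both get one of the six colors. -/

namespace SimpleGraph

variable {V W : Type} (G : SimpleGraph V) {k : ℕ}

def DistLeTwo (u v : V) : Prop := G.Adj u v ∨ ∃ w, G.Adj u w ∧ G.Adj w v

def IsTwoDistColoringOn (c : V → Fin k) (s : Set V) : Prop :=
  ∀ ⦃u⦄, u ∈ s → ∀ ⦃v⦄, v ∈ s → u ≠ v → G.DistLeTwo u v → c u ≠ c v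

variable {G}

lemma DistLeTwo.symm {u v : V} : G.DistLeTwo u v → G.DistLeTwo v u
  | .inl h => .inl h.symm
  | .inr ⟨w, huw, hwv⟩ => .inr ⟨w, hwv.symm, huw.symm⟩

lemma twoDistColorable_iff :
    TwoDistColorable G k ↔ ∃ c : V → Fin k, G.IsTwoDistColoringOn c Set.univ := by
  simp [TwoDistColorable, IsTwoDistColoringOn, DistLeTwo]

lemma ncard_neighborSet_eq_degree [Fintype V] [DecidableRel G.Adj] (v : V) :
    (G.neighborSet v).ncard = G.degree v := by
  rw [← card_neighborSet_eq_degree, Set.ncard_eq_toFinset_card', Set.toFinset_card]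

lemma ncard_distLeTwo_le_sum_degree [Fintype V] [DecidableRel G.Adj] (x : V) :
    {y | y ≠ x ∧ G.DistLeTwo x y}.ncard ≤ ∑ w ∈ G.neighborFinset x, G.degree w := by
  classical
  let T := (G.neighborFinset x).biUnion fun w => insert w ((G.neighborFinset w).erase x)
  have hT : {y | y ≠ x ∧ G.DistLeTwo x y} ⊆ T := by
    rintro y ⟨hyx, h | ⟨w, hxw, hwy⟩⟩
    · exact Finset.mem_biUnion.2 ⟨y, by simpa using h, Finset.mem_insert_self _ _⟩
    · exact Finset.mem_biUnion.2 ⟨w, by simpa using hxw,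
        Finset.mem_insert_of_mem (Finset.mem_erase.2 ⟨hyx, by simpa using hwy⟩)⟩
  calc {y | y ≠ x ∧ G.DistLeTwo x y}.ncard ≤ T.card :=
        (Set.ncard_le_ncard hT).trans_eq (Set.ncard_coe_finset T)
    _ ≤ ∑ w ∈ G.neighborFinset x, (insert w ((G.neighborFinset w).erase x)).card :=
        Finset.card_biUnion_le
    _ ≤ ∑ w ∈ G.neighborFinset x, G.degree w := Finset.sum_le_sum fun w hw => by
        have hxw : x ∈ G.neighborFinset w := by simpa [adj_comm] using hw
        rw [← card_neighborFinset_eq_degree, ← Finset.card_erase_add_one hxw]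
        exact Finset.card_insert_le _ _

lemma ncard_distLeTwo_le_degree_mul [Fintype V] [DecidableRel G.Adj] {Δ : ℕ}
    (hΔ : ∀ w, G.degree w ≤ Δ) (x : V) :
    {y | y ≠ x ∧ G.DistLeTwo x y}.ncard ≤ G.degree x * Δ :=
  calc _ ≤ ∑ w ∈ G.neighborFinset x, G.degree w := ncard_distLeTwo_le_sum_degree x
    _ ≤ (G.neighborFinset x).card • Δ := Finset.sum_le_card_nsmul _ _ _ fun w _ => hΔ w
    _ = G.degree x * Δ := by rw [card_neighborFinset_eq_degree, smul_eq_mul]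

lemma ncard_distLeTwo_le_of_adj [Fintype V] [DecidableRel G.Adj] {Δ : ℕ}
    (hΔ : ∀ w, G.degree w ≤ Δ) {x y : V} (hxy : G.Adj x y) :
    {z | z ≠ x ∧ G.DistLeTwo x z}.ncard ≤ G.degree y + (G.degree x - 1) * Δ := by
  classical
  have hy : y ∈ G.neighborFinset x := (G.mem_neighborFinset x y).2 hxy
  calc _ ≤ ∑ w ∈ G.neighborFinset x, G.degree w := ncard_distLeTwo_le_sum_degree x
    _ = G.degree y + ∑ w ∈ (G.neighborFinset x).erase y, G.degree w :=
        (Finset.add_sum_erase _ _ hy).symm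
    _ ≤ G.degree y + ((G.neighborFinset x).erase y).card • Δ := by
        gcongr
        exact Finset.sum_le_card_nsmul _ _ _ fun w _ => hΔ w
    _ = G.degree y + (G.degree x - 1) * Δ := by
        rw [Finset.card_erase_of_mem hy, card_neighborFinset_eq_degree, smul_eq_mul]

lemma IsTwoDistColoringOn.exists_insert [Finite V] {c : V → Fin k} {s : Set V}
    (hc : G.IsTwoDistColoringOn c s) (x : V) (hx : {y | y ≠ x ∧ G.DistLeTwo x y}.ncard < k) :
    ∃ c' : V → Fin k, G.IsTwoDistColoringOn c' (insert x s) := by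
  classical
  set N := {y | y ≠ x ∧ G.DistLeTwo x y}
  obtain ⟨a, ha⟩ : ∃ a, a ∉ c '' N := by
    refine (Set.ne_univ_iff_exists_notMem _).1 fun h => ?_
    have := (Set.ncard_image_le (f := c) (Set.toFinite N)).trans_lt hx
    simp [h] at this
  have hfresh : ∀ y, y ≠ x → G.DistLeTwo x y → a ≠ c y :=
    fun y hyx hxy hay => ha ⟨y, ⟨hyx, hxy⟩, hay.symm⟩
  refine ⟨Function.update c x a, fun u hu v hv huv hd => ?_⟩
  by_cases hux : u = x
  · subst hux
    simpa [Function.update_of_ne huv.symm] using hfresh v huv.symm hd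
  by_cases hvx : v = x
  · subst hvx
    simpa [Function.update_of_ne huv] using (hfresh u huv hd.symm).symm
  rw [Function.update_of_ne hux, Function.update_of_ne hvx]
  exact hc (hu.resolve_left hux) (hv.resolve_left hvx) huv hd

lemma _root_.TwoDistColorable.exists_isTwoDistColoringOn_range [NeZero k] (f : W ↪ V)
    (hf : ∀ w ∉ Set.range f, (G.neighborSet w ∩ Set.range f).Subsingleton)
    (hc : TwoDistColorable (G.comap f) k) :
    ∃ c : V → Fin k, G.IsTwoDistColoringOn c (Set.range f) := by
  obtain ⟨c, hc⟩ := hc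
  refine ⟨Function.extend f c 0, ?_⟩
  rintro _ ⟨i, rfl⟩ _ ⟨j, rfl⟩ hij hd
  rw [f.injective.extend_apply, f.injective.extend_apply]
  refine hc i j (ne_of_apply_ne f hij) ?_
  rcases hd with h | ⟨w, hiw, hwj⟩
  · exact .inl h
  by_cases hw : w ∈ Set.range f
  · obtain ⟨l, rfl⟩ := hw
    exact .inr ⟨l, hiw, hwj⟩
  · exact absurd (hf w hw ⟨hiw.symm, i, rfl⟩ ⟨hwj, j, rfl⟩) hij

lemma ncard_neighborSet_comap_le [Finite V] (f : W ↪ V) (i : W) :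
    ((G.comap f).neighborSet i).ncard ≤ (G.neighborSet (f i)).ncard :=
  Set.ncard_le_ncard_of_injOn f (fun _ hj => hj) f.injective.injOn

lemma IsAcyclic.exists_subsingleton_neighborSet [Finite V] [Nonempty V] (hG : G.IsAcyclic) :
    ∃ v, (G.neighborSet v).Subsingleton := by
  obtain ⟨u, v, p, hp, hmax⟩ := Walk.exists_isPath_forall_isPath_length_le_length G
  suffices ∀ w, G.Adj u w → w = p.snd from
    ⟨u, fun w hw w' hw' => (this w hw).trans (this w' hw').symm⟩
  intro w hw
  refine hG.eq_snd_of_adj_start hp hw (not_not.1 fun hwp => ?_)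
  have := hmax _ _ (p.cons hw.symm) (hp.cons hwp)
  simp at this

theorem IsAcyclic.twoDistColorable [Finite V] (hG : G.IsAcyclic)
    (hdeg : ∀ v, (G.neighborSet v).ncard < k) : TwoDistColorable G k := by
  induction hn : Nat.card V using Nat.strong_induction_on generalizing V with
  | _ n ih =>
  rcases isEmpty_or_nonempty V with hV | hV
  · exact ⟨isEmptyElim, fun u => isEmptyElim u⟩
  classical
  have := Fintype.ofFinite V
  obtain ⟨ℓ, hℓ⟩ := hG.exists_subsingleton_neighborSet
  have : NeZero k := ⟨(hdeg ℓ).ne_bot⟩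
  let f : {y // y ≠ ℓ} ↪ V := Function.Embedding.subtype _
  have hrange : Set.range f = {ℓ}ᶜ := Subtype.range_coe_subtype
  have hcomap : TwoDistColorable (G.comap f) k :=
    ih _ (hn ▸ Finite.card_subtype_lt (x := ℓ) (by simp)) (hG.of_comap f)
      (fun i => (ncard_neighborSet_comap_le f i).trans_lt (hdeg _)) rfl
  have hout : ∀ w ∉ Set.range f, (G.neighborSet w ∩ Set.range f).Subsingleton := by
    intro w hw
    obtain rfl : w = ℓ := by simpa [hrange] using hw
    exact hℓ.anti Set.inter_subset_left
  obtain ⟨c, hc⟩ := hcomap.exists_isTwoDistColoringOn_range f hout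
  have hdeg' : ∀ v, G.degree v ≤ k - 1 := fun v => by
    have := hdeg v
    rw [ncard_neighborSet_eq_degree] at this
    omega
  have hℓ' : G.degree ℓ ≤ 1 := by
    rw [← ncard_neighborSet_eq_degree]
    exact Set.ncard_le_one_iff_subsingleton.2 hℓ
  obtain ⟨c', hc'⟩ := hc.exists_insert ℓ <| (ncard_distLeTwo_le_degree_mul hdeg' ℓ).trans_lt <|
    calc G.degree ℓ * (k - 1) ≤ 1 * (k - 1) := Nat.mul_le_mul_right _ hℓ'
      _ < k := by have := hdeg ℓ; omega
  rw [hrange, Set.insert_eq, Set.union_compl_self] at hc'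
  exact twoDistColorable_iff.2 ⟨c', hc'⟩

lemma subsingleton_neighborSet_inter_of_adj [Fintype V] [DecidableRel G.Adj] {x y : V}
    (hxy : G.Adj x y) (hx : G.degree x ≤ 2) {s : Set V} (hy : y ∉ s) :
    (G.neighborSet x ∩ s).Subsingleton := by
  have : (G.neighborSet x \ {y}).ncard ≤ 1 := by
    rw [Set.ncard_sdiff_singleton_of_mem (s := G.neighborSet x) hxy, ncard_neighborSet_eq_degree]
    omega
  refine (Set.ncard_le_one_iff_subsingleton.1 this).anti fun z hz => ⟨hz.1, ?_⟩
  rintro rfl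
  exact hy hz.2

lemma _root_.IsMinor.of_comap {α : Type} {H : SimpleGraph α} (f : W ↪ V)
    (h : IsMinor H (G.comap f)) : IsMinor H G := by
  obtain ⟨B, hne, hdisj, hconn, hadj⟩ := h
  refine ⟨fun a => f '' B a, fun a => (hne a).image f,
    fun a b hab => (Set.disjoint_image_iff f.injective).2 (hdisj hab), fun a => ?_, ?_⟩
  · let φ := induceHom (Embedding.comap f G).toHom (Set.mapsTo_image f (B a))
    refine (hconn a).map φ ?_
    rintro ⟨_, x, hx, rfl⟩
    exact ⟨⟨x, hx⟩, rfl⟩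
  · intro a b hab
    obtain ⟨x, hx, y, hy, hxy⟩ := hadj hab
    exact ⟨f x, ⟨x, hx, rfl⟩, f y, ⟨y, hy, rfl⟩, hxy⟩

lemma _root_.IsPlanar.comap (f : W ↪ V) (h : IsPlanar G) : IsPlanar (G.comap f) :=
  ⟨fun hm => h.1 (hm.of_comap f), fun hm => h.2 (hm.of_comap f)⟩

lemma girth_le_girth_comap (f : W ↪ V) (h : ¬ (G.comap f).IsAcyclic) :
    G.girth ≤ (G.comap f).girth :=
  IsContained.girth_le ⟨(Embedding.comap f G).toCopy⟩ h

theorem exists_isTwoDistColoringOn_of_minimal [Fintype V] (hplanar : IsPlanar G)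
    (hsub : ∀ v, (G.neighborSet v).ncard ≤ 3) (hgirth : (8 : ℕ∞) ≤ G.girth)
    (hmin : ∀ (n : ℕ) (H : SimpleGraph (Fin n)), IsPlanar H →
      (∀ v, (H.neighborSet v).ncard ≤ 3) → (8 : ℕ∞) ≤ H.girth →
      ¬ TwoDistColorable H 6 → Fintype.card V ≤ n)
    {s : Set V} (hs : s ≠ Set.univ) (hout : ∀ w ∉ s, (G.neighborSet w ∩ s).Subsingleton) :
    ∃ c : V → Fin 6, G.IsTwoDistColoringOn c s := by
  classical
  let e : Fin (Fintype.card s) ↪ V :=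
    (Fintype.equivFin s).symm.toEmbedding.trans (Function.Embedding.subtype _)
  have hrange : Set.range e = s := by
    simp only [e, Function.Embedding.coe_trans, Set.range_comp, Equiv.coe_toEmbedding,
      Equiv.range_eq_univ, Set.image_univ, Function.Embedding.coe_subtype, Subtype.range_coe]
  have hcard : Fintype.card s < Fintype.card V := by
    obtain ⟨x, hx⟩ := (Set.ne_univ_iff_exists_notMem s).1 hs
    exact Fintype.card_subtype_lt hx
  have hsub' : ∀ i, ((G.comap e).neighborSet i).ncard ≤ 3 :=
    fun i => (ncard_neighborSet_comap_le e i).trans (hsub _)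
  have hcol : TwoDistColorable (G.comap e) 6 := by
    -- `girth` is `0` on forests, so `hmin` says nothing about them.
    by_cases hac : (G.comap e).IsAcyclic
    · exact hac.twoDistColorable fun i => (hsub' i).trans_lt (by norm_num)
    · by_contra hnc
      have := hmin _ _ (hplanar.comap e) hsub'
        (hgirth.trans (by exact_mod_cast girth_le_girth_comap e hac)) hnc
      omega
  rw [← hrange] at hout ⊢
  exact hcol.exists_isTwoDistColoringOn_range e hout

end SimpleGraph

open SimpleGraph in
/-- A vertex-minimal planar subcubic graph of girth at least 8 that is not
2-distance 6-colorable contains no two adjacent vertices of degree 2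
(equivalently, no `k`-path with `k ≥ 2`). -/
theorem stmt10 {V : Type} [Fintype V] (G : SimpleGraph V)
    (hplanar : IsPlanar G) (hsub : ∀ v, (G.neighborSet v).ncard ≤ 3)
    (hgirth : (8 : ℕ∞) ≤ G.girth) (hnc : ¬ TwoDistColorable G 6)
    (hmin : ∀ (n : ℕ) (H : SimpleGraph (Fin n)), IsPlanar H →
      (∀ v, (H.neighborSet v).ncard ≤ 3) → (8 : ℕ∞) ≤ H.girth →
      ¬ TwoDistColorable H 6 → Fintype.card V ≤ n) :
    ∀ u v, G.Adj u v →
      ¬((G.neighborSet u).ncard = 2 ∧ (G.neighborSet v).ncard = 2) := by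
  classical
  rintro u v huv ⟨hu, hv⟩
  have hdeg : ∀ w, G.degree w ≤ 3 := fun w => by
    rw [← ncard_neighborSet_eq_degree]
    exact hsub w
  rw [ncard_neighborSet_eq_degree] at hu hv
  have hout : ∀ w ∉ ({u, v}ᶜ : Set V), (G.neighborSet w ∩ {u, v}ᶜ).Subsingleton := by
    intro w hw
    rcases (by simpa [or_iff_not_imp_left] using hw : w = u ∨ w = v) with rfl | rfl
    · exact subsingleton_neighborSet_inter_of_adj huv hu.le (by simp)
    · exact subsingleton_neighborSet_inter_of_adj huv.symm hv.le (by simp)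
  obtain ⟨c, hc⟩ := exists_isTwoDistColoringOn_of_minimal hplanar hsub hgirth hmin
    (s := {u, v}ᶜ) ((Set.ne_univ_iff_exists_notMem _).2 ⟨u, by simp⟩) hout
  obtain ⟨c₁, hc₁⟩ :=
    hc.exists_insert v ((ncard_distLeTwo_le_of_adj hdeg huv.symm).trans_lt (by omega))
  obtain ⟨c₂, hc₂⟩ :=
    hc₁.exists_insert u ((ncard_distLeTwo_le_of_adj hdeg huv).trans_lt (by omega))
  have huniv : insert u (insert v ({u, v}ᶜ : Set V)) = Set.univ := by
    ext w
    by_cases w = u <;> by_cases w = v <;> simp [*]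
  exact hnc (twoDistColorable_iff.2 ⟨c₂, huniv ▸ hc₂⟩)
end

section
/- Let C = v0v1v2v3v4v5v6v7 be an 8-cycle where v0, v2, v4 have degree 2 and v1, v3, v5, v6, v7 have degree 3 (each with one neighbor outside the cycle). Suppose lists satisfy |L(v0)| ≥ 2, |L(v1)| ≥ 2, |L(v2)| ≥ 4, |L(v3)| ≥ 2, |L(v4)| ≥ 2 and the remaining cycle vertices v5, v6, v7 are already colored (counted among forbidden colors in the lists). If additionally all vertices among {v0,...,v4} pairwise within distance 2 must differ and v0, v4 each see all three colored vertices' relevant colors removed, then it is impossible that simultaneously L(v0) = L(v1) = {a,b}, L(v3) = L(v4) = {c,d}, L(v2) = {a,b,c,d}, and some color e ∉ {a,b,c,d} appears on v6; i.e., this configuration (configuration 1a1a1a0a0a) cannot occur in a minimal counterexample. -/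
/-!
Since `e ∉ {a, b, c, d}`, the colors `xu1, xu3` seen by `v2` must include `e`. If `e = xu1`, the
four colors seen by `v0` contain a repetition and cannot fill the four-element set `{a, b}ᶜ`; if
`e = xu3`, the same happens at `v4`.
-/

open Finset

lemma Finset.ne_of_card_eq_four {α : Type*} [DecidableEq α] {w x y z : α}
    (h : ({w, x, y, z} : Finset α).card = 4) : x ≠ z ∧ y ≠ z := by
  constructor <;> rintro rfl
  · have hdup : ({w, x, y, x} : Finset α) = {w, x, y} := by ext; simp; tauto
    have hle := h ▸ hdup ▸ card_le_three (a := w) (b := x) (c := y)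
    omega
  · have hdup : ({w, x, y, y} : Finset α) = {w, x, y} := by ext; simp
    have hle := h ▸ hdup ▸ card_le_three (a := w) (b := x) (c := y)
    omega

lemma Finset.card_compl_pair {α : Type*} [Fintype α] [DecidableEq α] {a b : α} (hab : a ≠ b) :
    ({a, b} : Finset α)ᶜ.card = Fintype.card α - 2 := by
  rw [card_compl, card_pair hab]

theorem stmt18_general (a b c d e x7 xu7 xu1 x5 xu5 xu3 : Fin 6)
    (hab : a ≠ b) (hcd : c ≠ d)
    (he : e ∉ ({a, b, c, d} : Finset (Fin 6)))
    (hv0 : ({x7, e, xu7, xu1} : Finset (Fin 6)) = ({a, b} : Finset (Fin 6))ᶜ)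
    (hv4 : ({x5, xu5, e, xu3} : Finset (Fin 6)) = ({c, d} : Finset (Fin 6))ᶜ)
    (hv2 : ({xu1, xu3} : Finset (Fin 6)) = ({a, b, c, d} : Finset (Fin 6))ᶜ) :
    False := by
  have hcard0 : ({x7, e, xu7, xu1} : Finset (Fin 6)).card = 4 := by
    rw [hv0, card_compl_pair hab]; rfl
  have hcard4 : ({x5, xu5, e, xu3} : Finset (Fin 6)).card = 4 := by
    rw [hv4, card_compl_pair hcd]; rfl
  have he_seen : e ∈ ({xu1, xu3} : Finset (Fin 6)) := hv2 ▸ mem_compl.2 he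
  rcases mem_insert.1 he_seen with rfl | he_xu3
  · exact (ne_of_card_eq_four hcard0).1 rfl
  · exact (ne_of_card_eq_four hcard4).2 (mem_singleton.1 he_xu3)

/-- Configuration `1a1a1a0a0a` is reducible (Lemma `first_reducible_cycles`,
case (a)). With 6 colors, on the 8-cycle `v0 … v7` with `v0, v2, v4` of degree
2, after coloring everything outside `S = {v0,…,v4}` we would have forced lists
`L(v0) = L(v1) = {a,b}`, `L(v3) = L(v4) = {c,d}`, `L(v2) = {a,b,c,d}` and some
color `e ∉ {a,b,c,d}` on `v6`.  Since `|L(v0)| = 2`, the four colored vertices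
seen by `v0` (namely `v7`, `v6`, the outside neighbor of `v7`, and the outside
neighbor of `v1`, with colors `x7, e, xu7, xu1`) carry exactly the four colors
of `{a,b}ᶜ`; symmetrically for `v4` (colors `x5, xu5, e, xu3` of `v5`, the
outside neighbor of `v5`, `v6`, and the outside neighbor of `v3`); and the two
colored vertices seen by `v2` (the outside neighbors of `v1` and `v3`, colors
`xu1, xu3`) carry exactly the two colors of `{a,b,c,d}ᶜ`.  This situation is
impossible. -/
theorem stmt18 (a b c d e x7 xu7 xu1 x5 xu5 xu3 : Fin 6)
    (hab : a ≠ b) (hcd : c ≠ d)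
    (habcd : ({a, b, c, d} : Finset (Fin 6)).card = 4)
    (he : e ∉ ({a, b, c, d} : Finset (Fin 6)))
    (hv0 : ({x7, e, xu7, xu1} : Finset (Fin 6)) = ({a, b} : Finset (Fin 6))ᶜ)
    (hv4 : ({x5, xu5, e, xu3} : Finset (Fin 6)) = ({c, d} : Finset (Fin 6))ᶜ)
    (hv2 : ({xu1, xu3} : Finset (Fin 6)) = ({a, b, c, d} : Finset (Fin 6))ᶜ) :
    False :=
  stmt18_general a b c d e x7 xu7 xu1 x5 xu5 xu3 hab hcd he hv0 hv4 hv2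
end
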